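/- arXiv:2506.19229 — 4 statements merged into one kernel-verified Lean document; each statement's English description precedes it below -/
import Mathlib

section
/- The characteristic polynomial of the 4×4 matrix T = [[0,0,1/M,0],[0,0,0,1/M],[-G,G,0,0],[G,-2G,0,-γ/M]] with γ = 2√(GM), G>0, M>0 factors as (λ-λ₁)²(λ-λ₂)² where λ₁ = ω₀(-1-i√3)/2, λ₂ = ω₀(-1+i√3)/2, and ω₀ = √(G/M). -/
open Polynomial

/-- The system matrix of the two-mass damped chain. -/
noncomputable def Tmat (G M : ℝ) : Matrix (Fin 4) (Fin 4) ℂ :=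
  !![0, 0, 1/(M:ℂ), 0;
     0, 0, 0, 1/(M:ℂ);
     -(G:ℂ), (G:ℂ), 0, 0;
     (G:ℂ), -2*(G:ℂ), 0, -(((2 * Real.sqrt (G*M) : ℝ) : ℂ))/(M:ℂ)]

set_option maxHeartbeats 1000000 in
theorem stmt0 (G M : ℝ) (hG : 0 < G) (hM : 0 < M) :
    (Tmat G M).charpoly =
      (X - C (((Real.sqrt (G/M) : ℝ) : ℂ) * (-1 - Complex.I * ((Real.sqrt 3 : ℝ) : ℂ)) / 2)) ^ 2 *
      (X - C (((Real.sqrt (G/M) : ℝ) : ℂ) * (-1 + Complex.I * ((Real.sqrt 3 : ℝ) : ℂ)) / 2)) ^ 2 := by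
  have hch : (Tmat G M).charmatrix =
      !![X, 0, -C (1/(M:ℂ)), 0;
         0, X, 0, -C (1/(M:ℂ));
         C (G:ℂ), -C (G:ℂ), X, 0;
         -C (G:ℂ), C (2*(G:ℂ)), 0, X + C ((((2 * Real.sqrt (G*M) : ℝ) : ℂ))/(M:ℂ))] := by
    ext i j
    fin_cases i <;> fin_cases j <;>
      simp [Tmat, Matrix.charmatrix_apply, Matrix.one_apply, Matrix.vecHead, Matrix.vecTail,
        map_neg, sub_neg_eq_add, div_eq_mul_inv]
  -- real facts
  have hMne : (M:ℝ) ≠ 0 := hM.ne'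
  have htw : Real.sqrt (G*M) = Real.sqrt (G/M) * M := by
    rw [show G*M = (G/M) * M^2 by field_simp, Real.sqrt_mul (by positivity),
      Real.sqrt_sq hM.le]
  have hw2 : Real.sqrt (G/M) * Real.sqrt (G/M) = G/M :=
    Real.mul_self_sqrt (by positivity)
  have hr2 : Real.sqrt 3 * Real.sqrt 3 = 3 := Real.mul_self_sqrt (by norm_num)
  -- complex facts
  have hGc : (G:ℂ) = ((Real.sqrt (G/M) : ℝ) : ℂ)^2 * (M:ℂ) := by
    rw [sq]; norm_cast; rw [hw2]; field_simp
  have htc : ((Real.sqrt (G*M) : ℝ) : ℂ) = ((Real.sqrt (G/M) : ℝ) : ℂ) * (M:ℂ) := by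
    norm_cast
  have hrc : ((Real.sqrt 3 : ℝ) : ℂ) * ((Real.sqrt 3 : ℝ) : ℂ) = 3 := by norm_cast
  have hMc : (M:ℂ) ≠ 0 := by exact_mod_cast hMne
  rw [Matrix.charpoly, hch]
  simp only [Matrix.det_succ_row_zero, Fin.sum_univ_succ, Fin.sum_univ_zero,
    Matrix.submatrix_apply, Matrix.det_fin_zero, Fin.succAbove, Matrix.cons_val',
    Matrix.cons_val_zero, Matrix.cons_val_one, Matrix.head_cons, Matrix.head_fin_const,
    Matrix.cons_val_fin_one, Matrix.empty_val', Matrix.cons_val_succ]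
  norm_num
  norm_num [Fin.lt_def, Fin.succ, Fin.castSucc, Fin.castAdd, Fin.castLE, Matrix.cons_val_succ]
  simp only [Nat.reduceAdd, Matrix.cons_val]
  rw [htc, hGc]
  generalize ((Real.sqrt (G/M) : ℝ) : ℂ) = w
  generalize hr : ((Real.sqrt 3 : ℝ) : ℂ) = r at hrc
  apply Polynomial.funext
  intro x
  simp only [eval_add, eval_mul, eval_pow, eval_sub, eval_neg, eval_C, eval_X, eval_ofNat, eval_zero]
  have hI := Complex.I_sq
  field_simp
  have h4 : Complex.I^4 = 1 := by rw [show (4:ℕ)=2*2 from rfl, pow_mul, Complex.I_sq]; ring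
  ring_nf
  rw [hI, h4]
  linear_combination (-8*x*w^3 - 8*x^2*w^2 - w^4*(r*r+5)) * hrc
end

section
/- With γ = 2√(GM), the eigenvalue λ₁ = ω₀(-1-i√3)/2 of the matrix T is defective: its algebraic multiplicity (as a root of the characteristic polynomial) is 2 but its geometric multiplicity is 1; consequently T is not diagonalizable. -/
open Polynomial

/-- λ₁ = ω₀(-1-i√3)/2. -/
noncomputable def lam1 (G M : ℝ) : ℂ :=
  ((Real.sqrt (G/M) : ℝ) : ℂ) * (-1 - Complex.I * ((Real.sqrt 3 : ℝ) : ℂ)) / 2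

/-- The other eigenvalue λ₂ = ω₀(-1+i√3)/2. -/
noncomputable def lam2 (G M : ℝ) : ℂ :=
  ((Real.sqrt (G/M) : ℝ) : ℂ) * (-1 + Complex.I * ((Real.sqrt 3 : ℝ) : ℂ)) / 2

lemma hs3C : ((Real.sqrt 3 : ℝ) : ℂ)^2 = 3 := by
  have : (Real.sqrt 3 : ℝ)^2 = 3 := Real.sq_sqrt (by norm_num)
  exact_mod_cast this

lemma hs3C0 : ((Real.sqrt 3 : ℝ) : ℂ) ≠ 0 := by
  have : (0:ℝ) < Real.sqrt 3 := Real.sqrt_pos.mpr (by norm_num)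
  exact_mod_cast this.ne'

noncomputable def bC : ℂ := (1 + Complex.I * ((Real.sqrt 3 : ℝ) : ℂ))/2

noncomputable def evec (G M : ℝ) : Fin 4 → ℂ :=
  ![1, bC, lam1 G M * M, lam1 G M * M * bC]

lemma charpoly_eq (G M : ℝ) (hG : 0 < G) (hM : 0 < M) :
    (Tmat G M).charpoly = (X - C (lam1 G M))^2 * (X - C (lam2 G M))^2 := by
  set w : ℝ := Real.sqrt (G/M) with hw
  have hM0 : (M:ℂ) ≠ 0 := by exact_mod_cast hM.ne'
  have hGC : (G:ℂ) = (M:ℂ) * (w:ℂ)^2 := by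
    have : (w:ℝ)^2 = G/M := Real.sq_sqrt (le_of_lt (div_pos hG hM))
    have h2 : (M:ℝ) * w^2 = G := by rw [this]; field_simp
    exact_mod_cast h2.symm
  have hγ : ((Real.sqrt (G*M) : ℝ) : ℂ) = (M:ℂ) * (w:ℂ) := by
    have h1 : Real.sqrt (G*M) = M * w := by
      rw [hw, show G*M = (G/M) * M^2 by field_simp, Real.sqrt_mul (le_of_lt (div_pos hG hM)),
        Real.sqrt_sq hM.le]; ring
    exact_mod_cast congrArg (fun t : ℝ => (t:ℂ)) h1
  have key : (Tmat G M).charpoly = (X^2 + C ((w:ℂ)) * X + C (((w:ℂ))^2))^2 := by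
    rw [Matrix.charpoly]
    rw [Matrix.det_succ_row_zero]
    simp only [Fin.sum_univ_succ, Fin.sum_univ_zero, Matrix.det_fin_three, Matrix.charmatrix_apply,
      Matrix.diagonal_apply, Matrix.submatrix_apply, Tmat, Matrix.cons_val', Matrix.cons_val_zero,
      Matrix.cons_val_one, Matrix.head_cons, Matrix.empty_val', Matrix.cons_val_fin_one,
      Matrix.head_fin_const, Fin.succ]
    norm_num [Fin.succAbove, Fin.lt_def, Fin.ext_iff, Fin.val_succ, Matrix.cons_val_one,
      Matrix.head_cons, Matrix.cons_val_zero, Matrix.cons_val]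
    rw [hγ, hGC]
    apply Polynomial.funext
    intro x
    simp only [eval_mul, eval_add, eval_sub, eval_pow, eval_neg, eval_X, eval_C, eval_one,
      eval_zero, eval_ofNat, Matrix.cons_val_two, Matrix.tail_cons, Matrix.head_cons,
      Matrix.cons_val_zero, Matrix.cons_val_one]
    field_simp
    ring
  have quad : (X:ℂ[X])^2 + C ((w:ℂ)) * X + C (((w:ℂ))^2)
      = (X - C (lam1 G M)) * (X - C (lam2 G M)) := by
    have h1 : lam1 G M + lam2 G M = -((w:ℝ) : ℂ) := by
      unfold lam1 lam2; rw [← hw]; ring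
    have h2 : lam1 G M * lam2 G M = (((w:ℝ) : ℂ))^2 := by
      unfold lam1 lam2; rw [← hw]
      linear_combination (((w:ℝ) : ℂ)^2/4) * hs3C -
        (((w:ℝ) : ℂ)^2 * ((Real.sqrt 3 : ℝ) : ℂ)^2/4) * Complex.I_sq
    have : (X - C (lam1 G M)) * (X - C (lam2 G M))
        = X^2 - C (lam1 G M + lam2 G M) * X + C (lam1 G M * lam2 G M) := by
      rw [map_add, map_mul]; ring
    rw [this, h1, h2, map_neg]; ring
  rw [key, quad]; ring

lemma lam_ne (G M : ℝ) (hG : 0 < G) (hM : 0 < M) : lam1 G M ≠ lam2 G M := by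
  have hw0 : ((Real.sqrt (G/M) : ℝ) : ℂ) ≠ 0 := by
    have : (0:ℝ) < Real.sqrt (G/M) := Real.sqrt_pos.mpr (div_pos hG hM)
    exact_mod_cast this.ne'
  intro h
  have : ((Real.sqrt (G/M) : ℝ) : ℂ) * Complex.I * ((Real.sqrt 3 : ℝ) : ℂ) = 0 := by
    have := sub_eq_zero.mpr h
    unfold lam1 lam2 at this
    linear_combination -this
  rcases mul_eq_zero.mp this with h' | h'
  · rcases mul_eq_zero.mp h' with h'' | h''
    · exact hw0 h''
    · exact Complex.I_ne_zero h''
  · exact hs3C0 h'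

lemma root_mult (G M : ℝ) (hG : 0 < G) (hM : 0 < M) :
    (Tmat G M).charpoly.rootMultiplicity (lam1 G M) = 2 := by
  rw [charpoly_eq G M hG hM]
  have hne : ((X:ℂ[X]) - C (lam1 G M))^2 * ((X:ℂ[X]) - C (lam2 G M))^2 ≠ 0 :=
    mul_ne_zero (pow_ne_zero _ (X_sub_C_ne_zero _)) (pow_ne_zero _ (X_sub_C_ne_zero _))
  rw [Polynomial.rootMultiplicity_mul hne, Polynomial.rootMultiplicity_X_sub_C_pow]
  have h0 : Polynomial.rootMultiplicity (lam1 G M) (((X:ℂ[X]) - C (lam2 G M))^2) = 0 := by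
    apply Polynomial.rootMultiplicity_eq_zero
    simp only [Polynomial.IsRoot, eval_pow, eval_sub, eval_X, eval_C]
    simp [pow_eq_zero_iff, sub_eq_zero]
    exact lam_ne G M hG hM
  rw [h0]

lemma ker_eq (G M : ℝ) (hG : 0 < G) (hM : 0 < M) :
    LinearMap.ker (Matrix.toLin'
        (lam1 G M • (1 : Matrix (Fin 4) (Fin 4) ℂ) - Tmat G M))
      = Submodule.span ℂ {evec G M} := by
  set w : ℝ := Real.sqrt (G/M) with hw
  set s : ℝ := Real.sqrt 3 with hs
  have hM0 : (M:ℂ) ≠ 0 := by exact_mod_cast hM.ne'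
  have hG0 : (G:ℂ) ≠ 0 := by exact_mod_cast hG.ne'
  have hGC : (G:ℂ) = (M:ℂ) * (w:ℂ)^2 := by
    have : (w:ℝ)^2 = G/M := Real.sq_sqrt (le_of_lt (div_pos hG hM))
    have h2 : (M:ℝ) * w^2 = G := by rw [this]; field_simp
    exact_mod_cast h2.symm
  have hγ : ((Real.sqrt (G*M) : ℝ) : ℂ) = (M:ℂ) * (w:ℂ) := by
    have h1 : Real.sqrt (G*M) = M * w := by
      rw [hw, show G*M = (G/M) * M^2 by field_simp, Real.sqrt_mul (le_of_lt (div_pos hG hM)),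
        Real.sqrt_sq hM.le]; ring
    exact_mod_cast congrArg (fun t : ℝ => (t:ℂ)) h1
  have hl2 : (lam1 G M)^2 * M = G * (bC - 1) := by
    rw [lam1, bC, hGC]
    linear_combination ((M:ℂ)*(w:ℂ)^2*Complex.I^2/4) * hs3C + (3*(M:ℂ)*(w:ℂ)^2/4) * Complex.I_sq
  have hbb : bC^2 = bC - 1 := by
    rw [bC]
    linear_combination (Complex.I^2/4) * hs3C + (3/4) * Complex.I_sq
  have hX : 2*(w:ℂ)*(lam1 G M)*(M:ℂ) = -2*(G:ℂ)*bC := by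
    rw [lam1, bC, hGC]; ring
  apply le_antisymm
  · intro x hx
    rw [LinearMap.mem_ker, Matrix.toLin'_apply] at hx
    have h0 := congrFun hx 0
    have h1 := congrFun hx 1
    have h2 := congrFun hx 2
    simp only [Matrix.mulVec, dotProduct, Fin.sum_univ_four, Matrix.sub_apply,
      Matrix.smul_apply, Matrix.one_apply, Tmat, Matrix.cons_val', Matrix.cons_val_zero,
      Matrix.cons_val_one, Matrix.head_cons, Matrix.empty_val', Matrix.cons_val_fin_one,
      Matrix.head_fin_const, Fin.isValue, Pi.zero_apply, smul_eq_mul,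
      Matrix.cons_val_two, Matrix.cons_val_three, Matrix.tail_cons] at h0 h1 h2
    simp (config := { decide := true }) [Matrix.vecHead, Matrix.vecTail] at h0 h1 h2
    have e2 : x 2 = lam1 G M * M * x 0 := by
      field_simp at h0
      linear_combination -h0
    have e3 : x 3 = lam1 G M * M * x 1 := by
      field_simp at h1
      linear_combination -h1
    have h2' : (G:ℂ) * x 0 - G * x 1 + lam1 G M * x 2 = 0 := by linear_combination h2
    have e1 : x 1 = x 0 * bC := by
      apply mul_left_cancel₀ hG0
      linear_combination (-1 : ℂ) * h2' + lam1 G M * e2 + x 0 * hl2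
    rw [Submodule.mem_span_singleton]
    refine ⟨x 0, ?_⟩
    funext i
    fin_cases i <;> simp [evec, e1, e2, e3] <;> ring
  · rw [Submodule.span_le, Set.singleton_subset_iff]
    rw [SetLike.mem_coe, LinearMap.mem_ker, Matrix.toLin'_apply]
    funext i
    fin_cases i <;>
      simp only [Matrix.mulVec, dotProduct, Fin.sum_univ_four, Matrix.sub_apply,
        Matrix.smul_apply, Matrix.one_apply, Tmat, evec, Matrix.cons_val', Matrix.cons_val_zero,
        Matrix.cons_val_one, Matrix.head_cons, Matrix.empty_val', Matrix.cons_val_fin_one,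
        Matrix.head_fin_const, Fin.isValue, Pi.zero_apply, smul_eq_mul,
        Matrix.cons_val_two, Matrix.cons_val_three, Matrix.tail_cons] <;>
      simp (config := { decide := true }) [Matrix.vecHead, Matrix.vecTail]
    · field_simp
      try ring
    · field_simp
      try ring
    · linear_combination hl2
    · rw [hγ]
      rw [show -(2*((M:ℂ)*(w:ℂ)))/(M:ℂ) = -(2*(w:ℂ)) by field_simp]
      linear_combination bC * hl2 + bC * hX - (G:ℂ) * hbb

lemma ker_rank (G M : ℝ) (hG : 0 < G) (hM : 0 < M) :
    Module.finrank ℂ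
      (LinearMap.ker (Matrix.toLin'
        (lam1 G M • (1 : Matrix (Fin 4) (Fin 4) ℂ) - Tmat G M))) = 1 := by
  rw [ker_eq G M hG hM]
  apply finrank_span_singleton
  intro h
  have := congrFun h 0
  simp [evec] at this

lemma charpoly_conj (P A : Matrix (Fin 4) (Fin 4) ℂ) (hP : IsUnit P) :
    (P⁻¹ * A * P).charpoly = A.charpoly := by
  have hdet : IsUnit P.det := (Matrix.isUnit_iff_isUnit_det P).mp hP
  have h1 : P⁻¹ * P = 1 := Matrix.nonsing_inv_mul P hdet
  have hcm : Matrix.charmatrix (P⁻¹ * A * P)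
      = (P⁻¹).map C * Matrix.charmatrix A * P.map C := by
    unfold Matrix.charmatrix
    rw [Matrix.mul_sub, Matrix.sub_mul]
    congr 1
    · rw [show (Matrix.scalar (Fin 4)) (X : ℂ[X]) = (X : ℂ[X]) • 1 by
        rw [Matrix.smul_one_eq_diagonal]; rfl]
      rw [Matrix.mul_smul, Matrix.smul_mul, Matrix.mul_one, ← Matrix.map_mul, h1, Matrix.map_one _ (map_zero C) (map_one C)]
    · simp only [RingHom.mapMatrix_apply]
      rw [← Matrix.map_mul, ← Matrix.map_mul]
  rw [Matrix.charpoly, Matrix.charpoly, hcm, Matrix.det_mul, Matrix.det_mul]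
  have : ((P⁻¹).map C).det * (P.map C).det = 1 := by
    rw [← Matrix.det_mul, ← Matrix.map_mul, h1, Matrix.map_one _ (map_zero C) (map_one C),
      Matrix.det_one]
  calc ((P⁻¹).map C).det * (Matrix.charmatrix A).det * (P.map C).det
      = (Matrix.charmatrix A).det * (((P⁻¹).map C).det * (P.map C).det) := by ring
    _ = (Matrix.charmatrix A).det := by rw [this, mul_one]

lemma charpoly_diagonal (d : Fin 4 → ℂ) :
    (Matrix.diagonal d).charpoly = ∏ i, (X - C (d i)) := by
  rw [Matrix.charpoly]
  have : Matrix.charmatrix (Matrix.diagonal d) = Matrix.diagonal (fun i => (X:ℂ[X]) - C (d i)) := by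
    ext i j
    by_cases h : i = j
    · subst h; simp
    · simp [Matrix.charmatrix_apply_ne _ _ _ h, Matrix.diagonal_apply_ne _ h,
        Matrix.diagonal_apply_ne d h]
  rw [this, Matrix.det_diagonal]

/-- λ₁ is a defective eigenvalue of T: algebraic multiplicity 2, geometric multiplicity 1,
and consequently T is not diagonalizable. -/
theorem stmt2 (G M : ℝ) (hG : 0 < G) (hM : 0 < M) :
    (Tmat G M).charpoly.rootMultiplicity (lam1 G M) = 2 ∧
    Module.finrank ℂ
      (LinearMap.ker (Matrix.toLin'
        (lam1 G M • (1 : Matrix (Fin 4) (Fin 4) ℂ) - Tmat G M))) = 1 ∧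
    ¬ ∃ P : Matrix (Fin 4) (Fin 4) ℂ, IsUnit P ∧ (P⁻¹ * Tmat G M * P).IsDiag := by
  refine ⟨root_mult G M hG hM, ker_rank G M hG hM, ?_⟩
  rintro ⟨P, hP, hD⟩
  have hdet : IsUnit P.det := (Matrix.isUnit_iff_isUnit_det P).mp hP
  have hdet' : IsUnit (P⁻¹).det := Matrix.isUnit_nonsing_inv_det P hdet
  set D : Matrix (Fin 4) (Fin 4) ℂ := P⁻¹ * Tmat G M * P with hDdef
  set d : Fin 4 → ℂ := fun i => D i i with hddef
  have hDdiag : D = Matrix.diagonal d := hD.diagonal_diag.symm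
  -- charpoly of D equals charpoly of T
  have hcp : D.charpoly = (Tmat G M).charpoly := charpoly_conj P (Tmat G M) hP
  -- multiplicity of lam1 among diagonal entries is 2
  have hprod : D.charpoly = ∏ i, (X - C (d i)) := by rw [hDdiag]; exact charpoly_diagonal d
  have hcount : Multiset.count (lam1 G M) (Multiset.map d Finset.univ.val) = 2 := by
    have hroots : (∏ i, ((X:ℂ[X]) - C (d i))).roots = Multiset.map d Finset.univ.val := by
      rw [Finset.prod_eq_multiset_prod]
      have hmm : Multiset.map (fun i => (X:ℂ[X]) - C (d i)) Finset.univ.val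
          = Multiset.map (fun a => (X:ℂ[X]) - C a) (Multiset.map d Finset.univ.val) := by
        rw [Multiset.map_map]; rfl
      rw [hmm]
      exact roots_multiset_prod_X_sub_C _
    rw [← hroots, Polynomial.count_roots, ← hprod, hcp]
    exact root_mult G M hG hM
  -- rank of lam1 • 1 - D is 2
  have hrankD : (lam1 G M • (1 : Matrix (Fin 4) (Fin 4) ℂ) - D).rank = 2 := by
    have : lam1 G M • (1 : Matrix (Fin 4) (Fin 4) ℂ) - D
        = Matrix.diagonal (fun i => lam1 G M - d i) := by
      rw [Matrix.smul_one_eq_diagonal, hDdiag, Matrix.diagonal_sub]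
    rw [this, Matrix.rank_diagonal]
    have hc1 : Fintype.card {i // lam1 G M - d i = 0} = 2 := by
      have hcongr : Fintype.card {i // lam1 G M - d i = 0} = Fintype.card {i // lam1 G M = d i} :=
        Fintype.card_congr (Equiv.subtypeEquivRight (fun i => sub_eq_zero))
      rw [hcongr, Fintype.card_subtype, ← hcount, Multiset.count_map]
      rfl
    have hc2 : Fintype.card {i // lam1 G M - d i ≠ 0}
        = Fintype.card (Fin 4) - Fintype.card {i // lam1 G M - d i = 0} :=
      Fintype.card_subtype_compl _
    rw [hc2, hc1]
    rfl
  -- rank of lam1 • 1 - T is 3 by rank-nullity and ker_rank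
  have hml : ∀ (A : Matrix (Fin 4) (Fin 4) ℂ), Matrix.toLin' A = A.mulVecLin := by
    intro A
    apply LinearMap.ext
    intro v
    simp [Matrix.toLin'_apply, Matrix.mulVecLin_apply]
  have hrankT : (lam1 G M • (1 : Matrix (Fin 4) (Fin 4) ℂ) - Tmat G M).rank = 3 := by
    have hrn := LinearMap.finrank_range_add_finrank_ker
      (Matrix.toLin' (lam1 G M • (1 : Matrix (Fin 4) (Fin 4) ℂ) - Tmat G M))
    rw [ker_rank G M hG hM] at hrn
    have : (lam1 G M • (1 : Matrix (Fin 4) (Fin 4) ℂ) - Tmat G M).rank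
        = Module.finrank ℂ (LinearMap.range (Matrix.toLin'
            (lam1 G M • (1 : Matrix (Fin 4) (Fin 4) ℂ) - Tmat G M))) := by
      rw [Matrix.rank, hml]
    rw [this]
    simp only [Module.finrank_pi, Fintype.card_fin] at hrn ⊢
    omega
  -- but conjugation preserves rank
  have hPP : P * P⁻¹ = 1 := Matrix.mul_nonsing_inv P hdet
  have hTconj : lam1 G M • (1 : Matrix (Fin 4) (Fin 4) ℂ) - Tmat G M
      = P * (lam1 G M • (1 : Matrix (Fin 4) (Fin 4) ℂ) - D) * P⁻¹ := by
    rw [hDdef]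
    rw [Matrix.mul_sub, Matrix.sub_mul]
    congr 1
    · rw [Matrix.mul_smul, Matrix.mul_one, Matrix.smul_mul, hPP]
    · rw [show P * (P⁻¹ * Tmat G M * P) * P⁻¹
          = (P * P⁻¹) * Tmat G M * (P * P⁻¹) by noncomm_ring, hPP]
      rw [Matrix.one_mul, Matrix.mul_one]
  have : (lam1 G M • (1 : Matrix (Fin 4) (Fin 4) ℂ) - Tmat G M).rank = 2 := by
    rw [hTconj]
    rw [Matrix.rank_mul_eq_left_of_isUnit_det P⁻¹ _ hdet',
      Matrix.rank_mul_eq_right_of_isUnit_det P _ hdet]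
    exact hrankD
  rw [hrankT] at this
  exact absurd this (by norm_num)
end

section
/- For γ = 2√(GM) and B the rank-one matrix with B₁₄ = 1/M, the point ε = 0 is an exceptional point of the family {T + εB}: T + 0·B has exactly 2 distinct eigenvalues, while there is a punctured neighborhood of 0 in ℂ on which T + εB has exactly 4 distinct eigenvalues. -/
set_option maxRecDepth 4000
set_option maxHeartbeats 2000000



/-- The rank-one perturbation matrix `B` with `B₁₄ = 1/M`. -/
noncomputable def Bmat (M : ℝ) : Matrix (Fin 4) (Fin 4) ℂ :=
  !![0, 0, 0, 1/(M:ℂ);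
     0, 0, 0, 0;
     0, 0, 0, 0;
     0, 0, 0, 0]

lemma det_key (G M : ℝ) (hG : 0 < G) (hM : 0 < M) (ε δ : ℂ) (hδ : δ^2 = ε) (x : ℂ) :
    (algebraMap ℂ (Matrix (Fin 4) (Fin 4) ℂ) x - (Tmat G M + ε • Bmat M)).det
      = (x^2 + (1+δ)*((Real.sqrt (G*M):ℂ)/M)*x + ((Real.sqrt (G*M):ℂ)/M)^2)
        * (x^2 + (1-δ)*((Real.sqrt (G*M):ℂ)/M)*x + ((Real.sqrt (G*M):ℂ)/M)^2) := by
  have hM0 : (M:ℂ) ≠ 0 := by exact_mod_cast hM.ne'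
  have hs : ((Real.sqrt (G*M):ℝ):ℂ)^2 = (G:ℂ) * (M:ℂ) := by
    rw [← Complex.ofReal_pow, Real.sq_sqrt (mul_nonneg hG.le hM.le), Complex.ofReal_mul]
  set s := Real.sqrt (G*M) with hsdef
  clear_value s
  have hmat : algebraMap ℂ (Matrix (Fin 4) (Fin 4) ℂ) x - (Tmat G M + ε • Bmat M)
      = !![x, 0, -(1/(M:ℂ)), -(ε/(M:ℂ));
           0, x, 0, -(1/(M:ℂ));
           (G:ℂ), -(G:ℂ), x, 0;
           -(G:ℂ), 2*(G:ℂ), 0, x + 2*(s:ℂ)/(M:ℂ)] := by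
    rw [Algebra.algebraMap_eq_smul_one]
    ext i j
    fin_cases i <;> fin_cases j <;>
      simp [Tmat, Bmat, Matrix.one_apply, hsdef, Matrix.vecHead, Matrix.vecTail] <;> ring
  rw [hmat]
  simp (config := { decide := true }) [Matrix.det_succ_row_zero, Fin.sum_univ_succ, Fin.succAbove, Matrix.vecHead, Matrix.vecTail, Fin.castSucc, Fin.castAdd, Fin.castLE, Fin.succ]
  have hmu : (M:ℂ) * (M:ℂ)⁻¹ = 1 := mul_inv_cancel₀ hM0
  linear_combination
    (-((3-ε)*x^2*(M:ℂ)⁻¹ + 2*x*(s:ℂ)*(M:ℂ)⁻¹^2 + (M:ℂ)⁻¹^2*((G:ℂ)+(s:ℂ)^2*(M:ℂ)⁻¹))*(M:ℂ)⁻¹) * hs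
    + (-((3-ε)*x^2*(M:ℂ)⁻¹ + 2*x*(s:ℂ)*(M:ℂ)⁻¹^2 + (M:ℂ)⁻¹^2*((G:ℂ)+(s:ℂ)^2*(M:ℂ)⁻¹))*(G:ℂ)) * hmu
    + (x^2*(s:ℂ)^2*(M:ℂ)⁻¹^2) * hδ

lemma spec_key (G M : ℝ) (hG : 0 < G) (hM : 0 < M) (ε δ : ℂ) (hδ : δ^2 = ε) :
    spectrum ℂ (Tmat G M + ε • Bmat M)
      = {x : ℂ | (x^2 + (1+δ)*((Real.sqrt (G*M):ℂ)/M)*x + ((Real.sqrt (G*M):ℂ)/M)^2)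
        * (x^2 + (1-δ)*((Real.sqrt (G*M):ℂ)/M)*x + ((Real.sqrt (G*M):ℂ)/M)^2) = 0} := by
  ext x
  rw [spectrum.mem_iff, Matrix.isUnit_iff_isUnit_det, isUnit_iff_ne_zero, not_ne_iff,
    det_key G M hG hM ε δ hδ x]
  rfl

lemma no_common (W δ : ℂ) (hW : W ≠ 0) (hδ : δ ≠ 0) (x : ℂ)
    (h1 : x^2+(1+δ)*W*x+W^2 = 0) (h2 : x^2+(1-δ)*W*x+W^2 = 0) : False := by
  have hx : x = 0 := by
    have h3 : 2*δ*W*x = 0 := by linear_combination h1 - h2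
    rcases mul_eq_zero.mp h3 with h | h
    · rcases mul_eq_zero.mp h with h' | h'
      · rcases mul_eq_zero.mp h' with h'' | h''
        · norm_num at h''
        · exact absurd h'' hδ
      · exact absurd h' hW
    · exact h
  rw [hx] at h1
  apply hW
  have : W^2 = 0 := by linear_combination h1
  exact pow_eq_zero_iff two_ne_zero |>.mp this

lemma quad_roots (W p : ℂ) (hW : W ≠ 0) (hp : ‖p‖ < 2) :
    ∃ a b : ℂ, a ≠ b ∧ (∀ x : ℂ, x^2 + p*W*x + W^2 = (x - a) * (x - b)) := by
  obtain ⟨t, ht⟩ := Complex.isAlgClosed.exists_pow_nat_eq (p^2*W^2 - 4*W^2) (n := 2) two_pos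
  refine ⟨(-(p*W)+t)/2, (-(p*W)-t)/2, ?_, ?_⟩
  · intro h
    have ht0 : t = 0 := by linear_combination h
    rw [ht0] at ht
    have : p^2 = 4 := by
      have h4 : p^2*W^2 = 4*W^2 := by linear_combination -ht
      exact mul_right_cancel₀ (pow_ne_zero 2 hW) h4
    have : ‖p^2‖ = 4 := by rw [this]; simp
    rw [norm_pow] at this
    nlinarith [norm_nonneg p]
  · intro x
    linear_combination (1/4 : ℂ) * ht

/-- `ε = 0` is an exceptional point of the family `{T + εB}`: the unperturbed
matrix has exactly 2 distinct eigenvalues, while on a punctured neighborhood of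
`0` the perturbed matrix has exactly 4 distinct eigenvalues. -/
theorem stmt7 (G M : ℝ) (hG : 0 < G) (hM : 0 < M) :
    (spectrum ℂ (Tmat G M + (0:ℂ) • Bmat M)).ncard = 2 ∧
    ∃ V ∈ nhds (0:ℂ), ∀ ε ∈ V \ {0},
      (spectrum ℂ (Tmat G M + ε • Bmat M)).ncard = 4 := by
  set W : ℂ := (Real.sqrt (G*M):ℂ)/M with hWdef
  have hM0 : (M:ℂ) ≠ 0 := by exact_mod_cast hM.ne'
  have hsq : Real.sqrt (G*M) ≠ 0 := by
    positivity
  have hW : W ≠ 0 := by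
    apply div_ne_zero _ hM0
    exact_mod_cast hsq
  constructor
  · -- unperturbed case
    rw [spec_key G M hG hM 0 0 (by norm_num)]
    have h3 : ((Real.sqrt 3 : ℝ):ℂ)^2 = 3 := by
      rw [← Complex.ofReal_pow, Real.sq_sqrt (by norm_num : (3:ℝ) ≥ 0)]
      norm_num
    set t : ℂ := ((Real.sqrt 3 : ℝ):ℂ) with htdef
    have ht0 : t ≠ 0 := by
      simp only [htdef, ne_eq, Complex.ofReal_eq_zero]
      positivity
    set r₁ : ℂ := W*(-1 + Complex.I*t)/2 with hr1
    set r₂ : ℂ := W*(-1 - Complex.I*t)/2 with hr2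
    have hfac : ∀ x : ℂ, x^2 + (1+(0:ℂ))*W*x + W^2 = (x - r₁) * (x - r₂) := by
      intro x
      rw [hr1, hr2]
      have hI : Complex.I^2 = -1 := Complex.I_sq
      linear_combination (W^2*t^2/4) * hI - (W^2/4) * h3
    have hset : {x : ℂ | (x^2 + (1+(0:ℂ))*W*x + W^2) * (x^2 + (1-(0:ℂ))*W*x + W^2) = 0}
        = {r₁, r₂} := by
      ext x
      simp only [Set.mem_setOf_eq, Set.mem_insert_iff, Set.mem_singleton_iff]
      have e : (x^2 + (1+(0:ℂ))*W*x + W^2) * (x^2 + (1-(0:ℂ))*W*x + W^2)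
          = ((x-r₁)*(x-r₂))^2 := by
        have h := hfac x
        rw [show ((1:ℂ)-0) = (1+0) by norm_num, h]
        ring
      rw [e, pow_eq_zero_iff two_ne_zero, mul_eq_zero, sub_eq_zero, sub_eq_zero]
    rw [hset]
    apply Set.ncard_pair
    intro h
    rw [hr1, hr2] at h
    have h2 : W * (Complex.I * t) = 0 := by linear_combination h
    rcases mul_eq_zero.mp h2 with h' | h'
    · exact hW h'
    · rcases mul_eq_zero.mp h' with h'' | h''
      · exact Complex.I_ne_zero h''
      · exact ht0 h''
  · -- perturbed case
    refine ⟨Metric.ball (0:ℂ) 1, Metric.ball_mem_nhds _ one_pos, ?_⟩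
    rintro ε ⟨hball, hne⟩
    have hε0 : ε ≠ 0 := hne
    have hεabs : ‖ε‖ < 1 := by
      simpa [Complex.dist_eq] using hball
    obtain ⟨δ, hδ⟩ := Complex.isAlgClosed.exists_pow_nat_eq ε (n := 2) two_pos
    have hδ0 : δ ≠ 0 := by
      intro h; rw [h] at hδ; simp at hδ; exact hε0 hδ.symm
    have hδabs : ‖δ‖ < 1 := by
      have h1 : ‖δ‖ ^ 2 < 1 := by
        rw [← norm_pow, hδ]; exact hεabs
      nlinarith [norm_nonneg δ]
    have hp1 : ‖1+δ‖ < 2 := by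
      calc ‖1+δ‖ ≤ ‖(1:ℂ)‖ + ‖δ‖ := norm_add_le _ _
        _ < 2 := by simp; linarith
    have hp2 : ‖1-δ‖ < 2 := by
      calc ‖1-δ‖ ≤ ‖(1:ℂ)‖ + ‖δ‖ := by
            simpa [sub_eq_add_neg] using norm_add_le (1:ℂ) (-δ)
        _ < 2 := by simp; linarith
    obtain ⟨a₁, b₁, hab1, hf1⟩ := quad_roots W (1+δ) hW hp1
    obtain ⟨a₂, b₂, hab2, hf2⟩ := quad_roots W (1-δ) hW hp2
    rw [spec_key G M hG hM ε δ hδ]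
    have hroot1 : ∀ x, (x = a₁ ∨ x = b₁) → x^2 + (1+δ)*W*x + W^2 = 0 := by
      rintro x (rfl | rfl) <;> rw [hf1] <;> ring
    have hroot2 : ∀ x, (x = a₂ ∨ x = b₂) → x^2 + (1-δ)*W*x + W^2 = 0 := by
      rintro x (rfl | rfl) <;> rw [hf2] <;> ring
    have hcross : ∀ x y, (x = a₁ ∨ x = b₁) → (y = a₂ ∨ y = b₂) → x ≠ y := by
      intro x y hx hy h
      subst h
      exact no_common W δ hW hδ0 x (hroot1 x hx) (hroot2 x hy)
    have hset : {x : ℂ | (x^2 + (1+δ)*W*x + W^2) * (x^2 + (1-δ)*W*x + W^2) = 0}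
        = {a₁, b₁, a₂, b₂} := by
      ext x
      simp only [Set.mem_setOf_eq, Set.mem_insert_iff, Set.mem_singleton_iff]
      rw [hf1 x, hf2 x, mul_eq_zero, mul_eq_zero, mul_eq_zero,
        sub_eq_zero, sub_eq_zero, sub_eq_zero, sub_eq_zero]
      tauto
    rw [hset]
    have ha₁ : a₁ ∉ ({b₁, a₂, b₂} : Set ℂ) := by
      simp only [Set.mem_insert_iff, Set.mem_singleton_iff]
      push_neg
      exact ⟨hab1, hcross a₁ a₂ (Or.inl rfl) (Or.inl rfl),
        hcross a₁ b₂ (Or.inl rfl) (Or.inr rfl)⟩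
    have hb₁ : b₁ ∉ ({a₂, b₂} : Set ℂ) := by
      simp only [Set.mem_insert_iff, Set.mem_singleton_iff]
      push_neg
      exact ⟨hcross b₁ a₂ (Or.inr rfl) (Or.inl rfl),
        hcross b₁ b₂ (Or.inr rfl) (Or.inr rfl)⟩
    rw [Set.ncard_insert_of_notMem ha₁ (Set.toFinite _),
      Set.ncard_insert_of_notMem hb₁ (Set.toFinite _),
      Set.ncard_pair hab2]
end

section
/- For a holomorphic Fredholm operator-valued function A : Λ → L(X,Y) on a connected open set Λ ⊆ ℂ, with A(k₀) invertible for some k₀ ∈ Λ, the spectrum σ(A) = {k : A(k) not invertible} is a discrete subset of Λ, every k ∈ σ(A) is an eigenvalue (A(k) not injective), and each eigenspace ker A(k) is finite-dimensional. -/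
open Filter
open ContinuousLinearMap

variable {X Y : Type*}
  [NormedAddCommGroup X] [NormedSpace ℂ X] [CompleteSpace X]
  [NormedAddCommGroup Y] [NormedSpace ℂ Y] [CompleteSpace Y]

/-- A bounded operator between Banach spaces is Fredholm if its kernel is
finite-dimensional and its range has finite codimension. -/
def IsFredholmOp (T : X →L[ℂ] Y) : Prop :=
  FiniteDimensional ℂ (LinearMap.ker (T : X →ₗ[ℂ] Y)) ∧
    FiniteDimensional ℂ (Y ⧸ LinearMap.range (T : X →ₗ[ℂ] Y))

/-- A bounded operator is boundedly invertible. -/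
def IsInvertibleOp (T : X →L[ℂ] Y) : Prop :=
  ∃ S : Y →L[ℂ] X, S.comp T = ContinuousLinearMap.id ℂ X ∧
    T.comp S = ContinuousLinearMap.id ℂ Y

theorem isInvertibleOp_iff_bijective (T : X →L[ℂ] Y) :
    IsInvertibleOp T ↔ Function.Bijective T := by
  constructor
  · rintro ⟨S, hST, hTS⟩
    constructor
    · intro x y hxy
      have hx : S (T x) = x := DFunLike.congr_fun hST x
      have hy : S (T y) = y := DFunLike.congr_fun hST y
      rw [← hx, ← hy, hxy]
    · intro y
      exact ⟨S y, DFunLike.congr_fun hTS y⟩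
  · intro h
    let e := ContinuousLinearEquiv.ofBijective T
      (LinearMap.ker_eq_bot.mpr h.1) (LinearMap.range_eq_top.mpr h.2)
    have he : ⇑e = ⇑T := rfl
    refine ⟨(e.symm : Y →L[ℂ] X), ?_, ?_⟩
    · ext x
      simp only [coe_comp', Function.comp_apply, ContinuousLinearMap.id_apply]
      rw [← he]
      exact e.symm_apply_apply x
    · ext y
      simp only [coe_comp', Function.comp_apply, ContinuousLinearMap.id_apply]
      rw [← he]
      exact e.apply_symm_apply y

theorem analyticAt_clm_conj {E F G H : Type*}
    [NormedAddCommGroup E] [NormedSpace ℂ E] [NormedAddCommGroup F] [NormedSpace ℂ F]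
    [NormedAddCommGroup G] [NormedSpace ℂ G] [NormedAddCommGroup H] [NormedSpace ℂ H]
    {A : ℂ → E →L[ℂ] F} {k : ℂ} (hA : AnalyticAt ℂ A k)
    (L₁ : F →L[ℂ] G) (L₂ : H →L[ℂ] E) :
    AnalyticAt ℂ (fun z => L₁ ∘L ((A z) ∘L L₂)) k := by
  have h := (((ContinuousLinearMap.compL ℂ H F G L₁).comp
    ((ContinuousLinearMap.compL ℂ H E F).flip L₂)).analyticAt (A k)).comp hA
  exact h

theorem AnalyticAt.clmComp {E F G : Type*}
    [NormedAddCommGroup E] [NormedSpace ℂ E] [NormedAddCommGroup F] [NormedSpace ℂ F]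
    [NormedAddCommGroup G] [NormedSpace ℂ G]
    {f : ℂ → F →L[ℂ] G} {g : ℂ → E →L[ℂ] F} {k : ℂ}
    (hf : AnalyticAt ℂ f k) (hg : AnalyticAt ℂ g k) :
    AnalyticAt ℂ (fun z => (f z) ∘L (g z)) k :=
  ((ContinuousLinearMap.compL ℂ E F G).analyticAt_bilinear (f k, g k)).comp₂ hf hg

section Block

variable {P Q R : Type*} [NormedAddCommGroup P] [NormedSpace ℂ P]
  [NormedAddCommGroup Q] [NormedSpace ℂ Q] [NormedAddCommGroup R] [NormedSpace ℂ R]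

theorem block_schur (T : (P × Q) →L[ℂ] (P × R)) (a : P →L[ℂ] P) (b : Q →L[ℂ] P)
    (c : P →L[ℂ] R) (d : Q →L[ℂ] R) (a' : P →L[ℂ] P)
    (hT : ∀ p q, T (p, q) = (a p + b q, c p + d q))
    (h1 : ∀ p, a' (a p) = p) (h2 : ∀ p, a (a' p) = p) :
    (∀ q : Q, (d - c ∘L (a' ∘L b)) q = 0 → T (-(a' (b q)), q) = 0) ∧
    (Function.Bijective T ↔ Function.Bijective (d - c ∘L (a' ∘L b))) := by
  set s : Q →L[ℂ] R := d - c ∘L (a' ∘L b) with hs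
  have hsq : ∀ q, s q = d q - c (a' (b q)) := by
    intro q; simp [hs, ContinuousLinearMap.sub_apply, ContinuousLinearMap.comp_apply]
  constructor
  · intro q hq
    have h0 : d q = c (a' (b q)) := by
      have h := hsq q
      rw [hq] at h
      exact sub_eq_zero.mp h.symm
    rw [hT]
    refine Prod.ext ?_ ?_
    · show a (-(a' (b q))) + b q = 0
      rw [map_neg, h2, neg_add_cancel]
    · show c (-(a' (b q))) + d q = 0
      rw [map_neg, h0, neg_add_cancel]
  · -- factorization T = L ∘ D ∘ M
    set Lf : (P × R) →L[ℂ] (P × R) :=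
      (ContinuousLinearMap.fst ℂ P R).prod
        ((c ∘L a') ∘L (ContinuousLinearMap.fst ℂ P R) + ContinuousLinearMap.snd ℂ P R) with hLf
    set Lb : (P × R) →L[ℂ] (P × R) :=
      (ContinuousLinearMap.fst ℂ P R).prod
        (ContinuousLinearMap.snd ℂ P R - (c ∘L a') ∘L (ContinuousLinearMap.fst ℂ P R)) with hLb
    have hLfb : ∀ x, Lb (Lf x) = x := by
      rintro ⟨p, r⟩
      simp [hLf, hLb, ContinuousLinearMap.prod_apply, ContinuousLinearMap.add_apply,
        ContinuousLinearMap.sub_apply, ContinuousLinearMap.comp_apply]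
    have hLbf : ∀ x, Lf (Lb x) = x := by
      rintro ⟨p, r⟩
      simp [hLf, hLb, ContinuousLinearMap.prod_apply, ContinuousLinearMap.add_apply,
        ContinuousLinearMap.sub_apply, ContinuousLinearMap.comp_apply]
    set L : (P × R) ≃L[ℂ] (P × R) := ContinuousLinearEquiv.equivOfInverse Lf Lb hLfb hLbf with hL
    set Mf : (P × Q) →L[ℂ] (P × Q) :=
      ((ContinuousLinearMap.fst ℂ P Q) + (a' ∘L b) ∘L (ContinuousLinearMap.snd ℂ P Q)).prod
        (ContinuousLinearMap.snd ℂ P Q) with hMf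
    set Mb : (P × Q) →L[ℂ] (P × Q) :=
      ((ContinuousLinearMap.fst ℂ P Q) - (a' ∘L b) ∘L (ContinuousLinearMap.snd ℂ P Q)).prod
        (ContinuousLinearMap.snd ℂ P Q) with hMb
    have hMfb : ∀ x, Mb (Mf x) = x := by
      rintro ⟨p, q⟩
      simp [hMf, hMb, ContinuousLinearMap.prod_apply, ContinuousLinearMap.add_apply,
        ContinuousLinearMap.sub_apply, ContinuousLinearMap.comp_apply]
    have hMbf : ∀ x, Mf (Mb x) = x := by
      rintro ⟨p, q⟩
      simp [hMf, hMb, ContinuousLinearMap.prod_apply, ContinuousLinearMap.add_apply,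
        ContinuousLinearMap.sub_apply, ContinuousLinearMap.comp_apply]
    set M : (P × Q) ≃L[ℂ] (P × Q) := ContinuousLinearEquiv.equivOfInverse Mf Mb hMfb hMbf with hM
    set D : (P × Q) →L[ℂ] (P × R) :=
      (a ∘L (ContinuousLinearMap.fst ℂ P Q)).prod (s ∘L (ContinuousLinearMap.snd ℂ P Q)) with hD
    have hfact : ∀ x, T x = L (D (M x)) := by
      rintro ⟨p, q⟩
      have hML : ⇑M = ⇑Mf := rfl
      have hLL : ⇑L = ⇑Lf := rfl
      rw [hT, hML, hLL]
      simp only [hMf, hLf, hD, ContinuousLinearMap.prod_apply,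
        ContinuousLinearMap.add_apply, ContinuousLinearMap.sub_apply,
        ContinuousLinearMap.comp_apply, ContinuousLinearMap.coe_fst',
        ContinuousLinearMap.coe_snd']
      refine Prod.ext ?_ ?_
      · show a p + b q = a (p + a' (b q))
        rw [map_add, h2]
      · show c p + d q = c (a' (a (p + a' (b q)))) + s q
        rw [h1, map_add, hsq]
        abel
    have hDmap : ⇑D = Prod.map ⇑a ⇑s := by
      funext x
      cases x
      rfl
    have habij : Function.Bijective ⇑a := Function.bijective_iff_has_inverse.mpr ⟨a', h1, h2⟩
    constructor
    · intro hTbij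
      have hDx : ∀ x, D x = L.symm (T (M.symm x)) := by
        intro x
        rw [hfact (M.symm x), M.apply_symm_apply, L.symm_apply_apply]
      have hDeq : ⇑D = ⇑L.symm ∘ ⇑T ∘ ⇑M.symm := funext hDx
      have hDbij : Function.Bijective ⇑D := by
        rw [hDeq]
        exact L.symm.bijective.comp (hTbij.comp M.symm.bijective)
      rw [hDmap] at hDbij
      exact (Prod.map_bijective.mp hDbij).2
    · intro hsbij
      have hTeq : ⇑T = ⇑L ∘ ⇑D ∘ ⇑M := funext hfact
      rw [hTeq]
      have hDbij : Function.Bijective ⇑D := by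
        rw [hDmap]
        exact Prod.map_bijective.mpr ⟨habij, hsbij⟩
      exact L.bijective.comp (hDbij.comp M.bijective)

end Block

set_option maxHeartbeats 2000000 in
set_option synthInstance.maxHeartbeats 400000 in
theorem local_dichotomy (A : ℂ → (X →L[ℂ] Y)) (k₁ : ℂ)
    (hA : AnalyticAt ℂ A k₁) (hF : IsFredholmOp (A k₁)) :
    (∀ᶠ z in nhds k₁, ¬ IsInvertibleOp (A z)) ∨
    ((∀ᶠ z in nhdsWithin k₁ {k₁}ᶜ, IsInvertibleOp (A z)) ∧
      (¬ IsInvertibleOp (A k₁) → ∃ x : X, x ≠ 0 ∧ A k₁ x = 0)) := by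
  classical
  obtain ⟨hNfd, hQfd⟩ := hF
  set N : Submodule ℂ X := LinearMap.ker (A k₁ : X →ₗ[ℂ] Y) with hNdef
  haveI : FiniteDimensional ℂ N := hNfd
  have hNclosed : IsClosed (N : Set X) := N.closed_of_finiteDimensional
  obtain ⟨X₀, hX₀closed, hcompl⟩ :=
    (Submodule.ClosedComplemented.of_finiteDimensional N).exists_isClosed_isCompl
  haveI : CompleteSpace X₀ := hX₀closed.completeSpace_coe
  haveI : CompleteSpace N := hNclosed.completeSpace_coe
  set g : X₀ →L[ℂ] Y := (A k₁).comp X₀.subtypeL with hgdef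
  have hgker : LinearMap.ker (g : X₀ →ₗ[ℂ] Y) = ⊥ := by
    rw [Submodule.eq_bot_iff]
    rintro ⟨x, hxX₀⟩ hx
    have hxN : x ∈ N := by
      simpa [hNdef, LinearMap.mem_ker, hgdef] using hx
    have hx0 : x = 0 := by
      have hmem : x ∈ N ⊓ X₀ := ⟨hxN, hxX₀⟩
      rwa [hcompl.inf_eq_bot, Submodule.mem_bot] at hmem
    exact Subtype.ext hx0
  have hgrange : LinearMap.range (g : X₀ →ₗ[ℂ] Y) = LinearMap.range (A k₁ : X →ₗ[ℂ] Y) := by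
    apply le_antisymm
    · rintro y ⟨x, rfl⟩
      exact ⟨X₀.subtypeL x, rfl⟩
    · rintro y ⟨x, rfl⟩
      have hx : x ∈ N ⊔ X₀ := by rw [hcompl.sup_eq_top]; trivial
      rw [Submodule.mem_sup] at hx
      obtain ⟨n, hn, w, hw, rfl⟩ := hx
      refine ⟨⟨w, hw⟩, ?_⟩
      have hn0 : A k₁ n = 0 := hn
      simp [hgdef, map_add, hn0]
  obtain ⟨F, hcomplF⟩ := Submodule.exists_isCompl (LinearMap.range (A k₁ : X →ₗ[ℂ] Y))
  haveI hFfd : FiniteDimensional ℂ F := by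
    haveI := hQfd
    exact (Submodule.quotientEquivOfIsCompl _ F hcomplF).finiteDimensional
  have hFclosed : IsClosed (F : Set Y) := F.closed_of_finiteDimensional
  haveI : CompleteSpace F := hFclosed.completeSpace_coe
  have hcompl' : IsCompl (LinearMap.range (g : X₀ →ₗ[ℂ] Y)) F := hgrange ▸ hcomplF
  set v : (X₀ × F) ≃L[ℂ] Y := g.coprodSubtypeLEquivOfIsCompl hcompl' hgker with hvdef
  have hv : ∀ w : X₀ × F, v w = A k₁ ↑w.1 + ↑w.2 := by
    intro w
    show (ContinuousLinearEquiv.ofBijective _ _ _) w = _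
    rw [ContinuousLinearEquiv.coeFn_ofBijective]
    simp [ContinuousLinearMap.coprod_apply, hgdef]
  set u : (X₀ × N) ≃L[ℂ] X := X₀.prodEquivOfClosedCompl N hcompl.symm hX₀closed hNclosed
    with hudef
  have hu : ∀ w : X₀ × N, u w = (↑w.1 + ↑w.2 : X) := fun w =>
    Submodule.coe_prodEquivOfIsCompl' X₀ N hcompl.symm w
  set La : Y →L[ℂ] X₀ := (ContinuousLinearMap.fst ℂ X₀ F) ∘L (v.symm : Y →L[ℂ] (X₀ × F))
    with hLadef
  set Lc : Y →L[ℂ] F := (ContinuousLinearMap.snd ℂ X₀ F) ∘L (v.symm : Y →L[ℂ] (X₀ × F))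
    with hLcdef
  set aa : ℂ → X₀ →L[ℂ] X₀ := fun z => La ∘L ((A z) ∘L X₀.subtypeL) with haadef
  set bb : ℂ → N →L[ℂ] X₀ := fun z => La ∘L ((A z) ∘L N.subtypeL) with hbbdef
  set cc : ℂ → X₀ →L[ℂ] F := fun z => Lc ∘L ((A z) ∘L X₀.subtypeL) with hccdef
  set dd : ℂ → N →L[ℂ] F := fun z => Lc ∘L ((A z) ∘L N.subtypeL) with hdddef
  set sfun : ℂ → N →L[ℂ] F := fun z => dd z - cc z ∘L ((Ring.inverse (aa z)) ∘L bb z)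
    with hsdef
  set Tm : ℂ → (X₀ × N) →L[ℂ] (X₀ × F) :=
    fun z => ((v.symm : Y →L[ℂ] (X₀ × F)) ∘L ((A z) ∘L (u : (X₀ × N) →L[ℂ] X))) with hTmdef
  have hTdec : ∀ z (p : X₀) (q : N), Tm z (p, q) = (aa z p + bb z q, cc z p + dd z q) := by
    intro z p q
    have hupq : (u : (X₀ × N) →L[ℂ] X) (p, q) = X₀.subtypeL p + N.subtypeL q := hu (p, q)
    show v.symm (A z ((u : (X₀ × N) →L[ℂ] X) (p, q))) = _
    rw [hupq, map_add, map_add]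
    rfl
  have hbijTA : ∀ z, Function.Bijective (A z) ↔ Function.Bijective (Tm z) := by
    intro z
    constructor
    · intro h
      have hTeq : ⇑(Tm z) = ⇑v.symm ∘ ⇑(A z) ∘ ⇑u := rfl
      rw [hTeq]
      exact v.symm.bijective.comp (h.comp u.bijective)
    · intro h
      have hAeq : ⇑(A z) = ⇑v ∘ ⇑(Tm z) ∘ ⇑u.symm := by
        funext x
        show A z x = v (v.symm (A z (u (u.symm x))))
        rw [u.apply_symm_apply, v.apply_symm_apply]
      rw [hAeq]
      exact v.bijective.comp (h.comp u.symm.bijective)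
  have ha1 : aa k₁ = 1 := by
    apply ContinuousLinearMap.ext
    intro p
    have hv0 : v (p, 0) = A k₁ ↑p := by rw [hv]; simp
    have hsymm : v.symm (A k₁ ↑p) = (p, 0) := by rw [← hv0, v.symm_apply_apply]
    show (v.symm (A k₁ ↑p)).1 = (1 : X₀ →L[ℂ] X₀) p
    rw [hsymm, ContinuousLinearMap.one_apply]
  have haa : AnalyticAt ℂ aa k₁ := by
    rw [haadef]; exact analyticAt_clm_conj hA La X₀.subtypeL
  have hbb : AnalyticAt ℂ bb k₁ := by
    rw [hbbdef]; exact analyticAt_clm_conj hA La N.subtypeL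
  have hcc : AnalyticAt ℂ cc k₁ := by
    rw [hccdef]; exact analyticAt_clm_conj hA Lc X₀.subtypeL
  have hdd : AnalyticAt ℂ dd k₁ := by
    rw [hdddef]; exact analyticAt_clm_conj hA Lc N.subtypeL
  have hwinv : AnalyticAt ℂ (fun z => Ring.inverse (aa z)) k₁ := by
    have h1 : AnalyticAt ℂ Ring.inverse ((1 : (X₀ →L[ℂ] X₀)ˣ) : X₀ →L[ℂ] X₀) :=
      analyticAt_inverse (𝕜 := ℂ) (A := X₀ →L[ℂ] X₀) 1
    exact h1.comp_of_eq haa (by rw [ha1, Units.val_one])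
  have hsan : AnalyticAt ℂ sfun k₁ := by
    rw [hsdef]
    exact hdd.sub (hcc.clmComp (hwinv.clmComp hbb))
  have hunit : ∀ᶠ z in nhds k₁, IsUnit (aa z) := by
    have hmem : ∀ᶠ T in nhds (1 : X₀ →L[ℂ] X₀), IsUnit T := by
      have h := Units.nhds (R := X₀ →L[ℂ] X₀) 1
      rw [Units.val_one] at h
      exact h
    have hc : Filter.Tendsto aa (nhds k₁) (nhds (1 : X₀ →L[ℂ] X₀)) := ha1 ▸ haa.continuousAt
    exact hc.eventually hmem
  have hkey : ∀ z, IsUnit (aa z) →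
      ((Function.Bijective (A z) ↔ Function.Bijective (sfun z)) ∧
        (∀ q : N, sfun z q = 0 → q ≠ 0 → ∃ x : X, x ≠ 0 ∧ A z x = 0)) := by
    intro z hz
    have h1 : ∀ p, (Ring.inverse (aa z)) ((aa z) p) = p := by
      intro p
      have h := Ring.inverse_mul_cancel (aa z) hz
      have h' := DFunLike.congr_fun h p
      rwa [ContinuousLinearMap.mul_apply, ContinuousLinearMap.one_apply] at h'
    have h2 : ∀ p, (aa z) ((Ring.inverse (aa z)) p) = p := by
      intro p
      have h := Ring.mul_inverse_cancel (aa z) hz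
      have h' := DFunLike.congr_fun h p
      rwa [ContinuousLinearMap.mul_apply, ContinuousLinearMap.one_apply] at h'
    obtain ⟨hker, hbij⟩ := block_schur (Tm z) (aa z) (bb z) (cc z) (dd z)
      (Ring.inverse (aa z)) (hTdec z) h1 h2
    have hseq : sfun z = dd z - cc z ∘L ((Ring.inverse (aa z)) ∘L bb z) := rfl
    constructor
    · rw [hbijTA z, hseq]
      exact hbij
    · intro q hq hq0
      have hT0 : Tm z (-(Ring.inverse (aa z) (bb z q)), q) = 0 := by
        apply hker
        rw [← hseq]
        exact hq
      refine ⟨u (-(Ring.inverse (aa z) (bb z q)), q), ?_, ?_⟩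
      · intro h0
        have hpair : ((-(Ring.inverse (aa z) (bb z q)), q) : X₀ × N) = 0 :=
          u.injective (by rw [h0, map_zero])
        exact hq0 (Prod.ext_iff.mp hpair).2
      · have hb : Tm z (-(Ring.inverse (aa z) (bb z q)), q)
            = v.symm (A z (u (-(Ring.inverse (aa z) (bb z q)), q))) := rfl
        have : A z (u (-(Ring.inverse (aa z) (bb z q)), q))
            = v (Tm z (-(Ring.inverse (aa z) (bb z q)), q)) := by
          rw [hb, v.apply_symm_apply]
        rw [this, hT0, map_zero]
  by_cases hdim : Module.finrank ℂ N = Module.finrank ℂ F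
  · -- equal dims: determinant argument
    obtain ⟨e⟩ := FiniteDimensional.nonempty_linearEquiv_of_finrank_eq hdim.symm
    set tmap : ℂ → N →ₗ[ℂ] N := fun z => (e : F →ₗ[ℂ] N) ∘ₗ (sfun z : N →ₗ[ℂ] F) with htm
    set fdet : ℂ → ℂ := fun z => LinearMap.det (tmap z) with hfdetdef
    have hdet_ne : ∀ z, IsUnit (aa z) → fdet z ≠ 0 → Function.Bijective (A z) := by
      intro z hz hne
      let E := LinearMap.equivOfDetNeZero (tmap z) hne
      have hE : ⇑E = ⇑(tmap z) := funext fun x => rfl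
      have htbij : Function.Bijective ⇑(tmap z) := hE ▸ E.bijective
      have hscoe : ⇑(sfun z) = ⇑e.symm ∘ ⇑(tmap z) := by
        funext q
        show sfun z q = e.symm ((e : F →ₗ[ℂ] N) (sfun z q))
        rw [LinearEquiv.coe_coe, e.symm_apply_apply]
      have hsbij : Function.Bijective (sfun z) := by
        rw [hscoe]
        exact e.symm.bijective.comp htbij
      exact (hkey z hz).1.mpr hsbij
    have hdet_zero : ∀ z, IsUnit (aa z) → fdet z = 0 → ∃ x : X, x ≠ 0 ∧ A z x = 0 := by
      intro z hz h0
      have hlt := LinearMap.bot_lt_ker_of_det_eq_zero h0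
      obtain ⟨q, hqker, hq0⟩ := Submodule.exists_mem_ne_zero_of_ne_bot hlt.ne'
      have hsq : sfun z q = 0 := by
        have htq : (e : F →ₗ[ℂ] N) (sfun z q) = 0 := hqker
        have h' := congrArg e.symm htq
        simpa using h'
      exact (hkey z hz).2 q hsq hq0
    have hfan : AnalyticAt ℂ fdet k₁ := by
      set bN := Module.finBasis ℂ N with hbN
      have hentry : ∀ i j, AnalyticAt ℂ
          (fun z => (LinearMap.toMatrix bN bN) (tmap z) i j) k₁ := by
        intro i j
        have heq : (fun z => (LinearMap.toMatrix bN bN) (tmap z) i j)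
            = (fun T : N →L[ℂ] F =>
                (LinearMap.toContinuousLinearMap ((bN.coord i) ∘ₗ (e : F →ₗ[ℂ] N)))
                  (((ContinuousLinearMap.apply ℂ F) (bN j)) T)) ∘ sfun := by
          funext z
          simp [LinearMap.toMatrix_apply, htm, Module.Basis.coord_apply, Function.comp,
            LinearMap.coe_toContinuousLinearMap']
        rw [heq]
        exact (((LinearMap.toContinuousLinearMap ((bN.coord i) ∘ₗ (e : F →ₗ[ℂ] N))) ∘L
          ((ContinuousLinearMap.apply ℂ F) (bN j))).analyticAt (sfun k₁)).comp hsan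
      have hrw : fdet = fun z => ∑ σ : Equiv.Perm (Fin (Module.finrank ℂ N)),
          (((Equiv.Perm.sign σ : ℤ) : ℂ)) *
            ∏ i, (LinearMap.toMatrix bN bN) (tmap z) (σ i) i := by
        funext z
        rw [hfdetdef]
        show LinearMap.det (tmap z) = _
        rw [← LinearMap.det_toMatrix bN (tmap z), Matrix.det_apply']
      rw [hrw]
      apply Finset.analyticAt_fun_sum
      intro σ _
      exact analyticAt_const.mul (Finset.analyticAt_fun_prod _ (fun i _ => hentry (σ i) i))
    rcases hfan.eventually_eq_zero_or_eventually_ne_zero with hz0 | hz1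
    · left
      filter_upwards [hunit, hz0] with z hz h0 hinvz
      obtain ⟨x, hx0, hx⟩ := hdet_zero z hz h0
      exact hx0 (((isInvertibleOp_iff_bijective _).mp hinvz).1 (by rw [hx, map_zero]))
    · right
      constructor
      · filter_upwards [hz1, hunit.filter_mono nhdsWithin_le_nhds] with z h1 hz
        exact (isInvertibleOp_iff_bijective _).mpr (hdet_ne z hz h1)
      · intro hninv
        have hu1 : IsUnit (aa k₁) := by rw [ha1]; exact isUnit_one
        have hf0 : fdet k₁ = 0 := by
          by_contra h
          exact hninv ((isInvertibleOp_iff_bijective _).mpr (hdet_ne k₁ hu1 h))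
        exact hdet_zero k₁ hu1 hf0
  · -- unequal dims: never invertible near k₁
    left
    filter_upwards [hunit] with z hz hinvz
    have hsbij := (hkey z hz).1.mp ((isInvertibleOp_iff_bijective _).mp hinvz)
    have : Nonempty (N ≃ₗ[ℂ] F) := ⟨LinearEquiv.ofBijective (sfun z : N →ₗ[ℂ] F) hsbij⟩
    exact hdim (LinearEquiv.finrank_eq this.some)

/-- Analytic Fredholm theorem: for a holomorphic Fredholm operator-valued
function `A` on a connected open set `Λ` with `A(k₀)` invertible for some
`k₀ ∈ Λ`, the spectrum `σ(A) = {k ∈ Λ : A(k) not invertible}` is discrete in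
`Λ`, each of its points is an eigenvalue, and eigenspaces are
finite-dimensional. -/
theorem stmt14 (Λ : Set ℂ) (hΛopen : IsOpen Λ) (hΛconn : IsConnected Λ)
    (A : ℂ → (X →L[ℂ] Y))
    (hA : AnalyticOnNhd ℂ A Λ)
    (hFred : ∀ k ∈ Λ, IsFredholmOp (A k))
    (k₀ : ℂ) (hk₀ : k₀ ∈ Λ) (hinv : IsInvertibleOp (A k₀)) :
    (∀ k ∈ Λ, ∀ᶠ z in nhdsWithin k {k}ᶜ, IsInvertibleOp (A z)) ∧
    (∀ k ∈ Λ, ¬ IsInvertibleOp (A k) → ∃ x : X, x ≠ 0 ∧ A k x = 0) ∧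
    (∀ k ∈ Λ, FiniteDimensional ℂ (LinearMap.ker (A k : X →ₗ[ℂ] Y))) := by
  have hNB : ∀ k : ℂ, Filter.NeBot (nhdsWithin k {k}ᶜ) := fun k =>
    Module.punctured_nhds_neBot ℂ ℂ k
  have hloc : ∀ k ∈ Λ, (∀ᶠ z in nhds k, ¬ IsInvertibleOp (A z)) ∨
      ((∀ᶠ z in nhdsWithin k {k}ᶜ, IsInvertibleOp (A z)) ∧
        (¬ IsInvertibleOp (A k) → ∃ x : X, x ≠ 0 ∧ A k x = 0)) :=
    fun k hk => local_dichotomy A k (hA k hk) (hFred k hk)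
  set Ω : Set ℂ := {k | k ∈ Λ ∧ ∀ᶠ z in nhdsWithin k {k}ᶜ, IsInvertibleOp (A z)} with hΩdef
  have hΩopen : IsOpen Ω := by
    rw [isOpen_iff_mem_nhds]
    rintro k ⟨hkΛ, hkev⟩
    have h1 : {z | IsInvertibleOp (A z)} ∈ nhdsWithin k {k}ᶜ := hkev
    rw [mem_nhdsWithin] at h1
    obtain ⟨O, hOopen, hkO, hOsub⟩ := h1
    have hmem : O ∩ Λ ∈ nhds k := (hOopen.inter hΛopen).mem_nhds ⟨hkO, hkΛ⟩
    filter_upwards [hmem] with z hz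
    refine ⟨hz.2, ?_⟩
    by_cases hzk : z = k
    · subst hzk; exact hkev
    · have hO' : (O ∩ {k}ᶜ) ∈ nhds z :=
        (hOopen.inter isOpen_compl_singleton).mem_nhds ⟨hz.1, hzk⟩
      have hev : ∀ᶠ w in nhds z, IsInvertibleOp (A w) := by
        filter_upwards [hO'] with w hw
        exact hOsub ⟨hw.1, hw.2⟩
      exact hev.filter_mono nhdsWithin_le_nhds
  have hcompl_open : IsOpen (Λ \ Ω) := by
    rw [isOpen_iff_mem_nhds]
    rintro k ⟨hkΛ, hkn⟩
    rcases hloc k hkΛ with hcase | hcase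
    · have hmem : {z | ¬ IsInvertibleOp (A z)} ∈ nhds k := hcase
      obtain ⟨O, hOsub, hOopen, hkO⟩ := mem_nhds_iff.mp hmem
      have hmem2 : O ∩ Λ ∈ nhds k := (hOopen.inter hΛopen).mem_nhds ⟨hkO, hkΛ⟩
      filter_upwards [hmem2] with z hz
      refine ⟨hz.2, ?_⟩
      rintro ⟨-, hzev⟩
      haveI := hNB z
      have hOz : ∀ᶠ w in nhdsWithin z {z}ᶜ, w ∈ O :=
        nhdsWithin_le_nhds (hOopen.mem_nhds hz.1)
      obtain ⟨w, hw1, hw2⟩ := (hzev.and hOz).exists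
      exact hOsub hw2 hw1
    · exact (hkn ⟨hkΛ, hcase.1⟩).elim
  have hk₀Ω : k₀ ∈ Ω := by
    rcases hloc k₀ hk₀ with hcase | hcase
    · exact absurd hinv hcase.self_of_nhds
    · exact ⟨hk₀, hcase.1⟩
  have hΛΩ : Λ ⊆ Ω := by
    by_contra hns
    rw [Set.not_subset] at hns
    obtain ⟨k, hkΛ, hkn⟩ := hns
    have hcover : Λ ⊆ Ω ∪ (Λ \ Ω) := fun z hz => by
      by_cases h : z ∈ Ω
      · exact Or.inl h
      · exact Or.inr ⟨hz, h⟩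
    have hne1 : (Λ ∩ Ω).Nonempty := ⟨k₀, hk₀, hk₀Ω⟩
    have hne2 : (Λ ∩ (Λ \ Ω)).Nonempty := ⟨k, hkΛ, hkΛ, hkn⟩
    obtain ⟨z, hz⟩ := hΛconn.isPreconnected Ω (Λ \ Ω) hΩopen hcompl_open hcover hne1 hne2
    exact hz.2.2.2 hz.2.1
  refine ⟨fun k hk => (hΛΩ hk).2, ?_, fun k hk => (hFred k hk).1⟩
  intro k hk hninv
  rcases hloc k hk with hcase | hcase
  · haveI := hNB k
    obtain ⟨w, hw1, hw2⟩ := ((hΛΩ hk).2.and (hcase.filter_mono nhdsWithin_le_nhds)).exists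
    exact (hw2 hw1).elim
  · exact hcase.2 hninv
end
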